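/- Let {hₖ} be a sequence of analytic functions on the open unit disc 𝔻 such that the function z ↦ Σₖ |hₖ(z)| is bounded on 𝔻. Then the series Σₖ |hₖ(z)| converges uniformly on every compact subset of 𝔻. -/

import Mathlib

/-!
The generalized mean value property `f w = ⨍ ((z - c) / (z - w)) • f z` over the circle
`|z - c| = R` bounds each `‖hₖ‖` on the disc of radius `r < R` by `R / (R - r)` times the mean
`δₖ` of `‖hₖ‖` over that circle. Averaging the bound `Σₖ ‖hₖ‖ ≤ M` over the circle gives
`Σₖ δₖ ≤ M`, so the Weierstrass M-test applies.
-/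

open Metric Complex Set Filter Real

theorem norm_circleAverage_le_circleAverage_norm {E : Type*} [NormedAddCommGroup E]
    [NormedSpace ℝ E] (f : ℂ → E) (c : ℂ) (R : ℝ) :
    ‖circleAverage f c R‖ ≤ circleAverage (fun z ↦ ‖f z‖) c R := by
  rw [circleAverage, circleAverage, norm_smul, smul_eq_mul, Real.norm_of_nonneg (by positivity)]
  gcongr
  exact intervalIntegral.norm_integral_le_integral_norm two_pi_pos.le

theorem DiffContOnCl.norm_le_div_mul_circleAverage_norm {E : Type*} [NormedAddCommGroup E]
    [NormedSpace ℂ E] [CompleteSpace E] {f : ℂ → E} {c w : ℂ} {r R : ℝ}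
    (hf : DiffContOnCl ℂ f (ball c R)) (hw : ‖w - c‖ ≤ r) (hr : r < R) :
    ‖f w‖ ≤ R / (R - r) * Real.circleAverage (fun z ↦ ‖f z‖) c R := by
  have hR : 0 < R := (norm_nonneg _).trans_lt (hw.trans_lt hr)
  have hwR : w ∈ ball c |R| := by
    rw [abs_of_pos hR, mem_ball, dist_eq_norm]; exact hw.trans_lt hr
  have hf' : DiffContOnCl ℂ f (ball c |R|) := by rwa [abs_of_pos hR]
  have hf_cont : ContinuousOn f (sphere c |R|) :=
    hf'.continuousOn_ball.mono sphere_subset_closedBall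
  have hkernel_cont : ContinuousOn (fun z ↦ (z - c) / (z - w)) (sphere c |R|) :=
    (continuousOn_id.sub continuousOn_const).div (continuousOn_id.sub continuousOn_const)
      fun z hz ↦ sub_ne_zero.mpr (sphere_disjoint_ball.ne_of_mem hz hwR)
  have hkernel_le : ∀ z ∈ sphere c |R|, ‖((z - c) / (z - w)) • f z‖ ≤ R / (R - r) * ‖f z‖ := by
    intro z hz
    rw [abs_of_pos hR, mem_sphere, dist_eq_norm] at hz
    have hzw : R - r ≤ ‖z - w‖ := by
      calc R - r ≤ ‖z - c‖ - ‖w - c‖ := by rw [hz]; linarith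
        _ ≤ ‖z - w‖ := by simpa using norm_sub_norm_le (z - c) (w - c)
    rw [norm_smul, norm_div, hz]
    gcongr
  calc ‖f w‖ = ‖Real.circleAverage (fun z ↦ ((z - c) / (z - w)) • f z) c R‖ := by
        rw [hf'.circleAverage_smul_div hwR]
    _ ≤ Real.circleAverage (fun z ↦ ‖((z - c) / (z - w)) • f z‖) c R :=
        norm_circleAverage_le_circleAverage_norm _ c R
    _ ≤ Real.circleAverage (fun z ↦ R / (R - r) * ‖f z‖) c R :=
        circleAverage_mono (hkernel_cont.smul hf_cont).norm.circleIntegrable'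
          (continuousOn_const.mul hf_cont.norm).circleIntegrable' hkernel_le
    _ = R / (R - r) * Real.circleAverage (fun z ↦ ‖f z‖) c R := by
        simp_rw [← smul_eq_mul]; exact circleAverage_fun_smul

theorem summable_circleAverage_norm_of_sum_le {E ι : Type*} [NormedAddCommGroup E]
    {h : ι → ℂ → E} {c : ℂ} {R M : ℝ}
    (hcont : ∀ k, ContinuousOn (h k) (sphere c |R|))
    (hM : ∀ z ∈ sphere c |R|, ∀ s : Finset ι, ∑ k ∈ s, ‖h k z‖ ≤ M) :
    Summable fun k ↦ circleAverage (fun z ↦ ‖h k z‖) c R := by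
  have hint : ∀ k, CircleIntegrable (fun z ↦ ‖h k z‖) c R :=
    fun k ↦ (hcont k).norm.circleIntegrable'
  refine summable_of_sum_le (c := M)
    (fun k ↦ circleAverage_nonneg_of_nonneg fun z _ ↦ norm_nonneg _) fun s ↦ ?_
  rw [← circleAverage_fun_sum fun k _ ↦ hint k]
  exact circleAverage_mono_on_of_le_circle (CircleIntegrable.fun_sum s fun k _ ↦ hint k)
    fun z hz ↦ hM z hz s

theorem tendstoUniformlyOn_sum_norm_of_sum_norm_le {E ι : Type*} [NormedAddCommGroup E]
    [NormedSpace ℂ E] [CompleteSpace E] {h : ι → ℂ → E} {c : ℂ} {r R M : ℝ}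
    (hh : ∀ k, DiffContOnCl ℂ (h k) (ball c R)) (hr : r < R)
    (hM : ∀ z ∈ sphere c R, ∀ s : Finset ι, ∑ k ∈ s, ‖h k z‖ ≤ M) :
    TendstoUniformlyOn (fun (s : Finset ι) (z : ℂ) ↦ ∑ k ∈ s, ‖h k z‖)
      (fun z ↦ ∑' k, ‖h k z‖) atTop (closedBall c r) := by
  rcases lt_or_ge r 0 with hr0 | hr0
  · simpa [closedBall_eq_empty.mpr hr0] using tendstoUniformlyOn_empty
  have hR : |R| = R := abs_of_pos (hr0.trans_lt hr)
  have hδ : Summable fun k ↦ circleAverage (fun z ↦ ‖h k z‖) c R :=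
    summable_circleAverage_norm_of_sum_le
      (fun k ↦ by rw [hR]; exact (hh k).continuousOn_ball.mono sphere_subset_closedBall)
      (by rwa [hR])
  refine tendstoUniformlyOn_tsum (hδ.mul_left (R / (R - r))) fun k z hz ↦ ?_
  rw [norm_norm]
  exact (hh k).norm_le_div_mul_circleAverage_norm (mem_closedBall_iff_norm.mp hz) hr

/-- If `{hₖ}` are analytic on the open unit disc and `z ↦ Σₖ |hₖ(z)|` is bounded on the disc,
then the series `Σₖ |hₖ(z)|` converges uniformly on every compact subset of the disc. -/
theorem uniform_convergence_on_compacts (h : ℕ → ℂ → ℂ)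
    (hanal : ∀ k, DifferentiableOn ℂ (h k) (Metric.ball (0 : ℂ) 1))
    (M : ℝ)
    (hbdd : ∀ z ∈ Metric.ball (0 : ℂ) 1, ∀ s : Finset ℕ, ∑ k ∈ s, ‖h k z‖ ≤ M) :
    ∀ K ⊆ Metric.ball (0 : ℂ) 1, IsCompact K →
      TendstoUniformlyOn (fun (s : Finset ℕ) (z : ℂ) => ∑ k ∈ s, ‖h k z‖)
        (fun z => ∑' k, ‖h k z‖) Filter.atTop K := by
  intro K hK hKc
  obtain ⟨r, hr1, hKr⟩ := exists_lt_subset_ball hKc.isClosed hK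
  obtain ⟨R, hrR, hR1⟩ := exists_between hr1
  refine (tendstoUniformlyOn_sum_norm_of_sum_norm_le (fun k ↦ ?_) hrR
    fun z hz ↦ hbdd z (sphere_subset_ball hR1 hz)).mono (hKr.trans ball_subset_closedBall)
  exact (hanal k).diffContOnCl_ball (closedBall_subset_ball hR1)
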